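/- arXiv:0808.4069 — 5 statements merged into one kernel-verified Lean document; each statement's English description precedes it below -/
import Mathlib

section
/- Let f(1+x) = Σ_{n≥0} a_n x^n ∈ 1 + xF_p[[x]] be an endomorphism of the group of 1-units U. Then for every m ≥ 0 the identity a_m · f(1+x) = D^{(m)}f(1+x) · (1+x)^m holds in F_p[[x]], where D^{(m)} denotes the m-th Hasse derivative. -/
/-!
Write `(1 + x)(1 + y) = 1 + (x + y(1 + x))`. Expanding `(x + y(1 + x))ⁿ` binomially, the
`xᵏyᵐ`-coefficient of `f((1 + x)(1 + y)) = Σₙ aₙ (x + y(1 + x))ⁿ` is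
`Σₙ aₙ C(n, m) C(m, k + m - n)`, which is also the `xᵏ`-coefficient of `D^(m) f · (1 + x)ᵐ`.
The `xᵏyᵐ`-coefficient of `f(1 + x) f(1 + y)` is `aₖ aₘ`, the `xᵏ`-coefficient of `aₘ f`.
-/

open PowerSeries

/-- Substitution of a two-variable power series `x` (with zero constant term) into the
one-variable power series `f`, computed coefficientwise. -/
noncomputable def applyMv {R : Type*} [CommRing R] (f : PowerSeries R)
    (x : MvPowerSeries (Fin 2) R) : MvPowerSeries (Fin 2) R :=
  fun d => ∑ n ∈ Finset.range (d 0 + d 1 + 1),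
    PowerSeries.coeff n f * MvPowerSeries.coeff d (x ^ n)

/-- The `m`-th Hasse derivative of a power series `Σ aₙ xⁿ`, namely `Σ_{n≥m} C(n,m) aₙ x^{n-m}`. -/
noncomputable def hasseDeriv {R : Type*} [CommRing R] (m : ℕ) (f : PowerSeries R) :
    PowerSeries R :=
  PowerSeries.mk fun i => ((i + m).choose m : R) * coeff (i + m) f

section

variable {R : Type*} [CommRing R]

theorem applyMv_eq_subst (f : R⟦X⟧) {a : MvPowerSeries (Fin 2) R}
    (ha : MvPowerSeries.constantCoeff a = 0) : applyMv f a = subst a f := by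
  ext d
  rw [coeff_subst (HasSubst.of_constantCoeff_zero ha),
    finsum_eq_sum_of_support_subset (s := Finset.range (d 0 + d 1 + 1)) _
      (Function.support_subset_iff'.mpr fun n hn => ?_)]
  · rfl
  · have hdn : Finsupp.degree d < n := by
      simp only [Finset.coe_range, Set.mem_Iio, not_lt] at hn
      rw [Finsupp.degree_eq_sum, Fin.sum_univ_two]
      omega
    rw [smul_eq_mul, MvPowerSeries.coeff_of_lt_order, mul_zero]
    exact lt_of_lt_of_le (by exact_mod_cast hdn)
      (MvPowerSeries.le_order_pow_of_constantCoeff_eq_zero n ha)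

theorem coeff_subst_X_zero_mul_subst_X_one (g h : R⟦X⟧) (d : Fin 2 →₀ ℕ) :
    MvPowerSeries.coeff d (subst (MvPowerSeries.X 0 : MvPowerSeries (Fin 2) R) g *
      subst (MvPowerSeries.X 1 : MvPowerSeries (Fin 2) R) h) =
      coeff (d 0) g * coeff (d 1) h := by
  rw [MvPowerSeries.coeff_mul,
    Finset.sum_eq_single (Finsupp.single 0 (d 0), Finsupp.single 1 (d 1))]
  · simp [coeff_subst_single]
  · rintro ⟨u, v⟩ huv hne
    rw [Finset.HasAntidiagonal.mem_antidiagonal] at huv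
    simp only [coeff_subst_single]
    split_ifs with hu hv
    · subst huv
      exact absurd (by rw [hu, hv]; simp) hne
    all_goals simp
  · intro h
    exact absurd (Finset.HasAntidiagonal.mem_antidiagonal.mpr (by ext i; fin_cases i <;> simp)) h

theorem coeff_one_add_X_pow (m j : ℕ) :
    coeff j ((1 + X : R⟦X⟧) ^ m) = m.choose j := by
  rw [← Polynomial.coeff_one_add_X_pow R, ← Polynomial.coeff_coe]
  simp [Polynomial.coe_add, Polynomial.coe_X]

/-- The binomial expansion of `(y (1 + x) + x) ^ n`, each term split into an `x`-part and a
`y`-part. -/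
theorem X_zero_mul_X_one_add_X_zero_add_X_one_pow (n : ℕ) :
    (MvPowerSeries.X 0 * MvPowerSeries.X 1 + MvPowerSeries.X 0 + MvPowerSeries.X 1 :
      MvPowerSeries (Fin 2) R) ^ n =
    ∑ j ∈ Finset.range (n + 1),
      subst (MvPowerSeries.X 0 : MvPowerSeries (Fin 2) R)
          ((n.choose j : R⟦X⟧) * (1 + X) ^ j * X ^ (n - j)) *
        subst (MvPowerSeries.X 1 : MvPowerSeries (Fin 2) R) (X ^ j : R⟦X⟧) := by
  rw [show (MvPowerSeries.X 0 * MvPowerSeries.X 1 + MvPowerSeries.X 0 + MvPowerSeries.X 1 :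
      MvPowerSeries (Fin 2) R) =
      MvPowerSeries.X 1 * (1 + MvPowerSeries.X 0) + MvPowerSeries.X 0 by ring,
    add_pow]
  refine Finset.sum_congr rfl fun j _ => ?_
  simp only [← coe_substAlgHom (HasSubst.X _), map_mul, map_pow, map_add, map_one, map_natCast,
    substAlgHom_X, mul_pow]
  ring

theorem coeff_X_zero_mul_X_one_add_X_zero_add_X_one_pow {n : ℕ} (d : Fin 2 →₀ ℕ)
    (hn : n ≤ d 0 + d 1) :
    MvPowerSeries.coeff d
      ((MvPowerSeries.X 0 * MvPowerSeries.X 1 + MvPowerSeries.X 0 + MvPowerSeries.X 1 :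
        MvPowerSeries (Fin 2) R) ^ n) = n.choose (d 1) * (d 1).choose (d 0 + d 1 - n) := by
  simp only [X_zero_mul_X_one_add_X_zero_add_X_one_pow, map_sum,
    coeff_subst_X_zero_mul_subst_X_one, coeff_X_pow, mul_ite, mul_one, mul_zero,
    Finset.sum_ite_eq, Finset.mem_range]
  split_ifs with hd
  · rw [mul_assoc, ← map_natCast (C (R := R)), coeff_C_mul, coeff_mul_X_pow', if_pos (by omega),
      coeff_one_add_X_pow, show d 0 - (n - d 1) = d 0 + d 1 - n by omega]
  · rw [Nat.choose_eq_zero_of_lt (by omega), Nat.cast_zero, zero_mul]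

theorem coeff_mul_coeff_eq_sum_of_applyMv_mul_applyMv (f : R⟦X⟧)
    (hf : applyMv f (MvPowerSeries.X 0) * applyMv f (MvPowerSeries.X 1) =
      applyMv f (MvPowerSeries.X 0 * MvPowerSeries.X 1 + MvPowerSeries.X 0 + MvPowerSeries.X 1))
    (k m : ℕ) :
    coeff k f * coeff m f =
      ∑ n ∈ Finset.range (k + m + 1), coeff n f * (n.choose m * m.choose (k + m - n)) := by
  set d : Fin 2 →₀ ℕ := Finsupp.single 0 k + Finsupp.single 1 m
  have hd0 : d 0 = k := by simp [d]
  have hd1 : d 1 = m := by simp [d]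
  have hcoeff := congrArg (MvPowerSeries.coeff d) hf
  rw [applyMv_eq_subst f (MvPowerSeries.constantCoeff_X 0),
    applyMv_eq_subst f (MvPowerSeries.constantCoeff_X 1), coeff_subst_X_zero_mul_subst_X_one,
    MvPowerSeries.coeff_apply, applyMv, hd0, hd1] at hcoeff
  rw [hcoeff]
  refine Finset.sum_congr rfl fun n hn => ?_
  have hn' : n ≤ d 0 + d 1 := by
    rw [hd0, hd1]
    exact Nat.lt_succ_iff.mp (Finset.mem_range.mp hn)
  rw [coeff_X_zero_mul_X_one_add_X_zero_add_X_one_pow d hn', hd0, hd1]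

theorem coeff_hasseDeriv_mul_one_add_X_pow (f : R⟦X⟧) (k m : ℕ) :
    coeff k (hasseDeriv m f * (1 + X) ^ m) =
      ∑ n ∈ Finset.range (k + m + 1), coeff n f * (n.choose m * m.choose (k + m - n)) := by
  rw [coeff_mul, Finset.Nat.sum_antidiagonal_eq_sum_range_succ
      (fun i j => coeff i (hasseDeriv m f) * coeff j ((1 + X) ^ m)),
    add_comm k m, add_assoc, Finset.sum_range_add,
    Finset.sum_eq_zero (s := Finset.range m) fun n hn => ?_, zero_add]
  · refine Finset.sum_congr rfl fun i _ => ?_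
    rw [hasseDeriv, coeff_mk, coeff_one_add_X_pow, add_comm m i,
      show m + k - (i + m) = k - i by omega]
    ring
  · rw [Nat.choose_eq_zero_of_lt (Finset.mem_range.mp hn), Nat.cast_zero, zero_mul, mul_zero]

end

theorem oneUnitEndo_hasse_identity_general {p : ℕ} (f : PowerSeries (ZMod p))
    (hf : applyMv f (MvPowerSeries.X 0) * applyMv f (MvPowerSeries.X 1) =
      applyMv f (MvPowerSeries.X 0 * MvPowerSeries.X 1 + MvPowerSeries.X 0 + MvPowerSeries.X 1)) :
    ∀ m : ℕ, PowerSeries.C (coeff m f) * f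
      = hasseDeriv m f * (1 + X) ^ m := by
  intro m
  ext k
  rw [coeff_C_mul, coeff_hasseDeriv_mul_one_add_X_pow, mul_comm,
    coeff_mul_coeff_eq_sum_of_applyMv_mul_applyMv f hf]

/-- Let `f(1+x) = Σ aₙ xⁿ ∈ 1 + x F_p[[x]]` be an endomorphism of the group of 1-units,
i.e. `f((1+x)(1+y)) = f(1+x) f(1+y)` as formal power series in two variables.  Then for every
`m ≥ 0` one has `aₘ · f(1+x) = D^(m) f(1+x) · (1+x)^m` in `F_p[[x]]`, where `D^(m)` is the
`m`-th Hasse derivative. -/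
theorem oneUnitEndo_hasse_identity {p : ℕ} [Fact p.Prime] (f : PowerSeries (ZMod p))
    (hconst : constantCoeff f = 1)
    (hf : applyMv f (MvPowerSeries.X 0) * applyMv f (MvPowerSeries.X 1) =
      applyMv f (MvPowerSeries.X 0 * MvPowerSeries.X 1 + MvPowerSeries.X 0 + MvPowerSeries.X 1)) :
    ∀ m : ℕ, PowerSeries.C (coeff m f) * f
      = hasseDeriv m f * (1 + X) ^ m :=
  oneUnitEndo_hasse_identity_general f hf
end

section
/- Let f(1+x) = Σ_{n≥0} a_n x^n ∈ 1 + xF_p[[x]] be an endomorphism of the group of 1-units. Then a_m = 0 if and only if the m-th Hasse derivative D^{(m)}f(1+x) is identically zero. -/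
open PowerSeries

/-- Coefficientwise substitution of a power series `x` with zero constant term into `f`:
`(applySeries f x) = f(x)`, i.e. `Σ aₙ xⁿ`. -/
noncomputable def applySeries {R : Type*} [CommRing R] (f x : PowerSeries R) : PowerSeries R :=
  PowerSeries.mk fun k => ∑ n ∈ Finset.range (k + 1), coeff n f * coeff k (x ^ n)

/-- `f ∈ 1 + x R[[x]]` defines an endomorphism of the group of 1-units:
`f(1) = 1` and `f(uv) = f(u) f(v)` for all 1-units `u, v`, where `f(u)` means the
substitution of `u - 1` into the series `f`. -/
def IsOneUnitEndo {R : Type*} [CommRing R] (f : PowerSeries R) : Prop :=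
  constantCoeff f = 1 ∧
    ∀ u v : PowerSeries R, constantCoeff u = 1 → constantCoeff v = 1 →
      applySeries f (u * v - 1) = applySeries f (u - 1) * applySeries f (v - 1)

/-!
Multiplicativity applied to `1 + X` and `1 + t` gives `f(X + t(1 + X)) = f(X) · f(t)`.
Expanding the left side by Taylor's formula in powers of `t(1 + X)` turns this into
`Σⱼ D⁽ʲ⁾f · (1 + X)ʲ · tʲ = Σⱼ aⱼ f · tʲ` for every `t ∈ X R⟦X⟧`, and comparing the `tʲ`-terms
(take `t = X^N` with `N` large) gives `D⁽ʲ⁾f · (1 + X)ʲ = aⱼ f`. As `(1 + X)ʲ` is a unit,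
`aₘ = 0` forces `D⁽ᵐ⁾f = 0`; conversely `aₘ` is the constant term of `D⁽ᵐ⁾f`.
-/

open Finset

section

variable {R : Type*} [CommRing R]

theorem coeff_pow_eq_zero_of_lt {s : R⟦X⟧} (hs : constantCoeff s = 0) {d j : ℕ} (hd : d < j) :
    coeff d (s ^ j) = 0 :=
  X_pow_dvd_iff.mp (pow_dvd_pow_of_dvd (X_dvd_iff.mpr hs) j) d hd

theorem coeff_mul_eq_sum_range (φ ψ : R⟦X⟧) (k : ℕ) :
    coeff k (φ * ψ) = ∑ n ∈ range (k + 1), coeff n φ * coeff k (X ^ n * ψ) := by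
  rw [coeff_mul, Nat.sum_antidiagonal_eq_sum_range_succ (fun a b => coeff a φ * coeff b ψ)]
  refine sum_congr rfl fun n hn => ?_
  rw [coeff_X_pow_mul', if_pos (mem_range_succ_iff.mp hn)]

theorem applySeries_X (f : R⟦X⟧) : applySeries f X = f := by
  ext k
  simp [applySeries, coeff_X_pow, sum_ite_eq]

theorem coeff_applySeries_of_lt {s : R⟦X⟧} (hs : constantCoeff s = 0) (f : R⟦X⟧) {k N : ℕ}
    (hk : k < N) : coeff k (applySeries f s) = ∑ n ∈ range N, coeff n f * coeff k (s ^ n) := by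
  rw [applySeries, coeff_mk]
  refine sum_subset (range_subset_range.mpr hk) fun n _ hn => ?_
  rw [coeff_pow_eq_zero_of_lt hs (by simpa using hn), mul_zero]

theorem coeff_mul_applySeries {t : R⟦X⟧} (ht : constantCoeff t = 0) (f g : R⟦X⟧) (k : ℕ) :
    coeff k (g * applySeries f t) = ∑ j ∈ range (k + 1), coeff j f * coeff k (g * t ^ j) := by
  simp_rw [coeff_mul, mul_sum]
  rw [sum_comm]
  refine sum_congr rfl fun ab hab => ?_
  have hk : ab.2 < k + 1 := Nat.lt_succ_of_le (HasAntidiagonal.antidiagonal.snd_le hab)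
  rw [coeff_applySeries_of_lt ht f hk, mul_sum]
  exact sum_congr rfl fun _ _ => by ring

theorem X_pow_mul_hasseDeriv (j : ℕ) (f : R⟦X⟧) :
    X ^ j * hasseDeriv j f = PowerSeries.mk fun n => (n.choose j : R) * coeff n f := by
  ext n
  rw [coeff_X_pow_mul', coeff_mk]
  split_ifs with hjn
  · rw [hasseDeriv, coeff_mk, Nat.sub_add_cancel hjn]
  · rw [Nat.choose_eq_zero_of_lt (not_le.mp hjn), Nat.cast_zero, zero_mul]

-- Taylor expansion `f(X + s) = Σⱼ D⁽ʲ⁾f · sʲ` at `s = X u`.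
theorem coeff_applySeries_X_mul_one_add (f u : R⟦X⟧) (k : ℕ) :
    coeff k (applySeries f (X * (1 + u))) =
      ∑ j ∈ range (k + 1), coeff k (X ^ j * hasseDeriv j f * u ^ j) := by
  have one_add_pow : ∀ n ≤ k, (1 + u) ^ n = ∑ j ∈ range (k + 1), (n.choose j : R⟦X⟧) * u ^ j := by
    intro n hn
    rw [add_comm, add_pow]
    refine (sum_subset (range_subset_range.mpr (Nat.succ_le_succ hn)) fun j _ hj => ?_).trans ?_
    · rw [Nat.choose_eq_zero_of_lt (by simpa using hj), Nat.cast_zero, mul_zero]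
    · exact sum_congr rfl fun j _ => by rw [one_pow, mul_one, mul_comm]
  rw [coeff_applySeries_of_lt (by simp) f (Nat.lt_succ_self k)]
  calc ∑ n ∈ range (k + 1), coeff n f * coeff k ((X * (1 + u)) ^ n)
      = ∑ n ∈ range (k + 1), ∑ j ∈ range (k + 1),
          coeff n f * ((n.choose j : R) * coeff k (X ^ n * u ^ j)) := by
        refine sum_congr rfl fun n hn => ?_
        rw [mul_pow, one_add_pow n (mem_range_succ_iff.mp hn), mul_sum, map_sum, mul_sum]
        refine sum_congr rfl fun j _ => ?_
        rw [mul_left_comm, ← map_natCast (C (R := R)), coeff_C_mul]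
    _ = ∑ j ∈ range (k + 1), coeff k ((X ^ j * hasseDeriv j f) * u ^ j) := by
        rw [sum_comm]
        refine sum_congr rfl fun j _ => ?_
        rw [X_pow_mul_hasseDeriv, coeff_mul_eq_sum_range]
        exact sum_congr rfl fun n _ => by rw [coeff_mk]; ring

theorem eq_zero_of_forall_sum_coeff_mul_pow_eq_zero {G : ℕ → R⟦X⟧}
    (h : ∀ t : R⟦X⟧, constantCoeff t = 0 → ∀ k, ∑ j ∈ range (k + 1), coeff k (G j * t ^ j) = 0)
    (j : ℕ) : G j = 0 := by
  induction j using Nat.strong_induction_on with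
  | _ j ih =>
  ext i
  -- With `t = X ^ (i + 1)`, the degree `i + (i + 1) j` coefficient of `Σ Gⱼ' tʲ'` sees
  -- nothing of `Gⱼ'` for `j' > j`, and `Gⱼ'` vanishes for `j' < j`.
  have hk := h (X ^ (i + 1)) (by simp) (i + (i + 1) * j)
  rw [sum_eq_single_of_mem j (mem_range_succ_iff.mpr (by nlinarith)) fun j' _ hne => ?_,
    ← pow_mul, coeff_mul_X_pow', if_pos (by omega), Nat.add_sub_cancel] at hk
  · rwa [map_zero]
  · rcases hne.lt_or_gt with hlt | hgt
    · rw [ih j' hlt, zero_mul, map_zero]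
    · rw [← pow_mul, coeff_mul_X_pow', if_neg (by nlinarith)]

theorem IsOneUnitEndo.hasseDeriv_mul_one_add_X_pow {f : R⟦X⟧} (hf : IsOneUnitEndo f) (j : ℕ) :
    hasseDeriv j f * (1 + X) ^ j = C (coeff j f) * f := by
  refine sub_eq_zero.mp (eq_zero_of_forall_sum_coeff_mul_pow_eq_zero
    (G := fun j => hasseDeriv j f * (1 + X) ^ j - C (coeff j f) * f) (fun t ht k => ?_) j)
  obtain ⟨u, rfl⟩ := X_dvd_iff.mpr ht
  have hmul : applySeries f (X * (1 + u * (1 + X))) = f * applySeries f (X * u) := by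
    have := hf.2 (1 + X) (1 + X * u) (by simp) (by simp)
    rwa [add_sub_cancel_left, add_sub_cancel_left, applySeries_X,
      show (1 + X) * (1 + X * u) - 1 = X * (1 + u * (1 + X)) by ring] at this
  have hcoeff := congrArg (coeff k) hmul
  rw [coeff_applySeries_X_mul_one_add, coeff_mul_applySeries (by simp)] at hcoeff
  rw [← sub_eq_zero_of_eq hcoeff, ← sum_sub_distrib]
  refine sum_congr rfl fun i _ => ?_
  rw [sub_mul, map_sub, mul_assoc (C _), coeff_C_mul]
  congr 2
  rw [mul_pow, mul_pow]
  ring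

end

theorem coeff_eq_zero_iff_hasseDeriv_eq_zero_general {p : ℕ}
    (f : PowerSeries (ZMod p)) (hf : IsOneUnitEndo f) (m : ℕ) :
    coeff m f = 0 ↔ hasseDeriv m f = 0 := by
  have hunit : IsUnit ((1 + X : PowerSeries (ZMod p)) ^ m) :=
    (isUnit_iff_constantCoeff.mpr (by simp)).pow m
  constructor
  · intro h
    have := hf.hasseDeriv_mul_one_add_X_pow m
    rwa [h, map_zero, zero_mul, hunit.mul_left_eq_zero] at this
  · intro h
    simpa [hasseDeriv] using congrArg (coeff 0) h

theorem coeff_eq_zero_iff_hasseDeriv_eq_zero {p : ℕ} [Fact p.Prime]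
    (f : PowerSeries (ZMod p)) (hf : IsOneUnitEndo f) (m : ℕ) :
    coeff m f = 0 ↔ hasseDeriv m f = 0 :=
  coeff_eq_zero_iff_hasseDeriv_eq_zero_general f hf m
end

section
/- If P, Q ∈ F_p[x] are relatively prime polynomials with P(0) = Q(0) = 1 and P(x)P(y)Q(xy+x+y) = Q(x)Q(y)P(xy+x+y) in F_p[x,y], then P(x)P(y) = P(xy+x+y) and Q(x)Q(y) = Q(xy+x+y). -/
open MvPolynomial

noncomputable section CFEaux

def CFE.Emap (F : Type*) [Field F] :
    MvPolynomial (Fin 2) F ≃ₐ[F] Polynomial (Polynomial F) :=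
  (MvPolynomial.finSuccEquiv F 1).trans (Polynomial.mapAlgEquiv
    ((MvPolynomial.finSuccEquiv F 0).trans
      (Polynomial.mapAlgEquiv (MvPolynomial.isEmptyAlgEquiv F (Fin 0)))))

theorem CFE.Emap_X0 (F : Type*) [Field F] : CFE.Emap F (X 0) = Polynomial.X := by
  simp [CFE.Emap, finSuccEquiv_X_zero]

theorem CFE.Emap_X1 (F : Type*) [Field F] : CFE.Emap F (X 1) = Polynomial.C Polynomial.X := by
  have h : (X 1 : MvPolynomial (Fin 2) F) = X (Fin.succ 0) := rfl
  simp [CFE.Emap, h, finSuccEquiv_X_succ, finSuccEquiv_X_zero]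

end CFEaux

/-- If `P, Q ∈ F_p[x]` are relatively prime with `P(0) = Q(0) = 1` and
`P(x)P(y)Q(xy+x+y) = Q(x)Q(y)P(xy+x+y)` in `F_p[x,y]`, then
`P(x)P(y) = P(xy+x+y)` and `Q(x)Q(y) = Q(xy+x+y)`. -/
theorem coprime_functional_equation {p : ℕ} [Fact p.Prime]
    (P Q : Polynomial (ZMod p)) (hcop : IsCoprime P Q)
    (hP0 : P.eval 0 = 1) (hQ0 : Q.eval 0 = 1)
    (h : Polynomial.aeval (X 0 : MvPolynomial (Fin 2) (ZMod p)) P *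
          Polynomial.aeval (X 1 : MvPolynomial (Fin 2) (ZMod p)) P *
          Polynomial.aeval (X 0 * X 1 + X 0 + X 1 : MvPolynomial (Fin 2) (ZMod p)) Q =
        Polynomial.aeval (X 0 : MvPolynomial (Fin 2) (ZMod p)) Q *
          Polynomial.aeval (X 1 : MvPolynomial (Fin 2) (ZMod p)) Q *
          Polynomial.aeval (X 0 * X 1 + X 0 + X 1 : MvPolynomial (Fin 2) (ZMod p)) P) :
    Polynomial.aeval (X 0 : MvPolynomial (Fin 2) (ZMod p)) P *
        Polynomial.aeval (X 1 : MvPolynomial (Fin 2) (ZMod p)) P =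
      Polynomial.aeval (X 0 * X 1 + X 0 + X 1 : MvPolynomial (Fin 2) (ZMod p)) P ∧
    Polynomial.aeval (X 0 : MvPolynomial (Fin 2) (ZMod p)) Q *
        Polynomial.aeval (X 1 : MvPolynomial (Fin 2) (ZMod p)) Q =
      Polynomial.aeval (X 0 * X 1 + X 0 + X 1 : MvPolynomial (Fin 2) (ZMod p)) Q := by
  classical
  set s : MvPolynomial (Fin 2) (ZMod p) := X 0 * X 1 + X 0 + X 1 with hsdef
  have hPne : P ≠ 0 := fun h0 => by simp [h0] at hP0
  have hQne : Q ≠ 0 := fun h0 => by simp [h0] at hQ0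
  set u : MvPolynomial (Fin 2) (ZMod p) →ₐ[ZMod p] Polynomial (ZMod p) :=
    aeval ![Polynomial.X, 0] with hudef
  set w : MvPolynomial (Fin 2) (ZMod p) →ₐ[ZMod p] Polynomial (ZMod p) :=
    aeval ![0, Polynomial.X] with hwdef
  have huX0 : u (X 0) = Polynomial.X := by simp [hudef]
  have huX1 : u (X 1) = 0 := by
    show (aeval ![Polynomial.X, 0]) (X 1) = 0
    rw [aeval_X]; rfl
  have hwX0 : w (X 0) = 0 := by
    show (aeval ![0, Polynomial.X]) (X 0) = 0
    rw [aeval_X]; rfl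
  have hwX1 : w (X 1) = Polynomial.X := by
    show (aeval ![0, Polynomial.X]) (X 1) = Polynomial.X
    rw [aeval_X]; rfl
  have hus : u s = Polynomial.X := by
    rw [hsdef, map_add, map_add, map_mul, huX0, huX1]; ring
  have hws : w s = Polynomial.X := by
    rw [hsdef, map_add, map_add, map_mul, hwX0, hwX1]; ring
  have haeval0 : ∀ (R : Polynomial (ZMod p)), R.eval 0 = 1 →
      Polynomial.aeval (0 : Polynomial (ZMod p)) R = 1 := by
    intro R hR
    rw [Polynomial.aeval_def, Polynomial.eval₂_at_zero, Polynomial.coeff_zero_eq_eval_zero,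
      hR, map_one]
  have huPs : u (Polynomial.aeval s P) = P := by
    rw [← Polynomial.aeval_algHom_apply, hus, Polynomial.aeval_X_left_apply]
  have huQs : u (Polynomial.aeval s Q) = Q := by
    rw [← Polynomial.aeval_algHom_apply, hus, Polynomial.aeval_X_left_apply]
  have huPA : u (Polynomial.aeval (X 0 : MvPolynomial (Fin 2) (ZMod p)) P) = P := by
    rw [← Polynomial.aeval_algHom_apply, huX0, Polynomial.aeval_X_left_apply]
  have hwPB : w (Polynomial.aeval (X 1 : MvPolynomial (Fin 2) (ZMod p)) P) = P := by
    rw [← Polynomial.aeval_algHom_apply, hwX1, Polynomial.aeval_X_left_apply]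
  have hwPA : w (Polynomial.aeval (X 0 : MvPolynomial (Fin 2) (ZMod p)) P) = 1 := by
    rw [← Polynomial.aeval_algHom_apply, hwX0]; exact haeval0 P hP0
  have hPs_ne : Polynomial.aeval s P ≠ 0 := fun h0 => hPne (by rw [← huPs, h0, map_zero])
  have hQs_ne : Polynomial.aeval s Q ≠ 0 := fun h0 => hQne (by rw [← huQs, h0, map_zero])
  have hPA_ne : Polynomial.aeval (X 0 : MvPolynomial (Fin 2) (ZMod p)) P ≠ 0 :=
    fun h0 => hPne (by rw [← huPA, h0, map_zero])
  have hPB_ne : Polynomial.aeval (X 1 : MvPolynomial (Fin 2) (ZMod p)) P ≠ 0 :=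
    fun h0 => hPne (by rw [← hwPB, h0, map_zero])
  have cop_s : IsCoprime (Polynomial.aeval s P) (Polynomial.aeval s Q) :=
    hcop.map (Polynomial.aeval s).toRingHom
  have hdvd : Polynomial.aeval s P ∣
      Polynomial.aeval (X 0 : MvPolynomial (Fin 2) (ZMod p)) P *
        Polynomial.aeval (X 1 : MvPolynomial (Fin 2) (ZMod p)) P := by
    apply cop_s.dvd_of_dvd_mul_right
    exact ⟨Polynomial.aeval (X 0 : MvPolynomial (Fin 2) (ZMod p)) Q *
        Polynomial.aeval (X 1 : MvPolynomial (Fin 2) (ZMod p)) Q, by rw [h]; ring⟩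
  obtain ⟨c, hc⟩ := hdvd
  have hc_ne : c ≠ 0 := by
    rintro rfl
    rw [mul_zero] at hc
    exact mul_ne_zero hPA_ne hPB_ne hc
  have hwc : w c = 1 := by
    have hwhc := congrArg w hc
    rw [map_mul, map_mul, hwPA, hwPB, ← Polynomial.aeval_algHom_apply, hws,
      Polynomial.aeval_X_left_apply, one_mul] at hwhc
    have h2 : P * w c = P * 1 := by rw [mul_one]; exact hwhc.symm
    exact mul_left_cancel₀ hPne h2
  -- degree argument via Emap
  set E := CFE.Emap (ZMod p) with hEdef
  have hEX0 : E (X 0) = Polynomial.X := CFE.Emap_X0 (ZMod p)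
  have hEX1 : E (X 1) = Polynomial.C Polynomial.X := CFE.Emap_X1 (ZMod p)
  have hEs : E s = Polynomial.X * Polynomial.C Polynomial.X + Polynomial.X +
      Polynomial.C Polynomial.X := by
    rw [hsdef, map_add, map_add, map_mul, hEX0, hEX1]
  have g_inj : Function.Injective (algebraMap (ZMod p) (Polynomial (ZMod p))) :=
    (algebraMap (ZMod p) (Polynomial (ZMod p))).injective
  have haevalX : ∀ (R : Polynomial (ZMod p)),
      Polynomial.aeval (Polynomial.X : Polynomial (Polynomial (ZMod p))) R =
        R.map (algebraMap (ZMod p) (Polynomial (ZMod p))) := by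
    intro R
    rw [← Polynomial.aeval_map_algebraMap (Polynomial (ZMod p))
      (Polynomial.X : Polynomial (Polynomial (ZMod p))) R, Polynomial.aeval_X_left_apply]
  have hE_PA : E (Polynomial.aeval (X 0 : MvPolynomial (Fin 2) (ZMod p)) P) =
      P.map (algebraMap (ZMod p) (Polynomial (ZMod p))) := by
    rw [← Polynomial.aeval_algHom_apply, hEX0, haevalX]
  have hE_PB : E (Polynomial.aeval (X 1 : MvPolynomial (Fin 2) (ZMod p)) P) =
      Polynomial.C P := by
    rw [← Polynomial.aeval_algHom_apply, hEX1]
    have := Polynomial.aeval_algHom_apply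
      ((Polynomial.CAlgHom : Polynomial (ZMod p) →ₐ[Polynomial (ZMod p)]
        Polynomial (Polynomial (ZMod p))).restrictScalars (ZMod p)) Polynomial.X P
    simp only [AlgHom.coe_restrictScalars', Polynomial.CAlgHom_apply] at this
    rw [this, Polynomial.aeval_X_left_apply]
  have hE_Ps : E (Polynomial.aeval s P) =
      (P.map (algebraMap (ZMod p) (Polynomial (ZMod p)))).comp (E s) := by
    rw [← Polynomial.aeval_algHom_apply, Polynomial.comp_eq_aeval,
      Polynomial.aeval_map_algebraMap]
  have hdeg_s : (E s).natDegree = 1 := by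
    have h1 : E s = Polynomial.C (Polynomial.X + 1) * Polynomial.X +
        Polynomial.C (Polynomial.X : Polynomial (ZMod p)) := by
      rw [hEs, map_add, Polynomial.C_1]; ring
    have hne : (Polynomial.X + 1 : Polynomial (ZMod p)) ≠ 0 := by
      simpa using Polynomial.X_add_C_ne_zero (1 : ZMod p)
    rw [h1, Polynomial.natDegree_linear hne]
  have hmap_ne : P.map (algebraMap (ZMod p) (Polynomial (ZMod p))) ≠ 0 :=
    (Polynomial.map_ne_zero_iff g_inj).mpr hPne
  have hmapdeg : (P.map (algebraMap (ZMod p) (Polynomial (ZMod p)))).natDegree = P.natDegree :=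
    Polynomial.natDegree_map_eq_of_injective g_inj P
  have hEc_ne : E c ≠ 0 := fun h0 => hc_ne (E.injective (by rw [h0, map_zero]))
  have hEPs_ne : E (Polynomial.aeval s P) ≠ 0 :=
    fun h0 => hPs_ne (E.injective (by rw [h0, map_zero]))
  have hEPA_ne : E (Polynomial.aeval (X 0 : MvPolynomial (Fin 2) (ZMod p)) P) ≠ 0 :=
    fun h0 => hPA_ne (E.injective (by rw [h0, map_zero]))
  have hEPB_ne : E (Polynomial.aeval (X 1 : MvPolynomial (Fin 2) (ZMod p)) P) ≠ 0 :=
    fun h0 => hPB_ne (E.injective (by rw [h0, map_zero]))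
  have hEhc := congrArg (fun z => (E z).natDegree) hc
  simp only [map_mul] at hEhc
  rw [Polynomial.natDegree_mul hEPA_ne hEPB_ne,
    Polynomial.natDegree_mul hEPs_ne hEc_ne, hE_PA, hE_PB, hE_Ps, hmapdeg,
    Polynomial.natDegree_C, Polynomial.natDegree_comp, hmapdeg, hdeg_s] at hEhc
  have hdegc : (E c).natDegree = 0 := by omega
  obtain ⟨γ, hγ⟩ := Polynomial.natDegree_eq_zero.mp hdegc
  -- evaluate outer variable at 0 : recover w c
  set ν : Polynomial (Polynomial (ZMod p)) →ₐ[ZMod p] Polynomial (ZMod p) :=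
    ((Polynomial.aeval (0 : Polynomial (ZMod p))).restrictScalars (ZMod p)) with hνdef
  have hνE : ∀ m : MvPolynomial (Fin 2) (ZMod p), ν (E m) = w m := by
    have : ν.comp E.toAlgHom = w := by
      apply MvPolynomial.algHom_ext
      intro i
      fin_cases i
      · show ν (E (X 0)) = w (X 0)
        rw [hEX0, hwX0]
        simp [hνdef]
      · show ν (E (X 1)) = w (X 1)
        rw [hEX1, hwX1]
        simp [hνdef]
    intro m
    have := congrArg (fun f => (f : _ →ₐ[ZMod p] _) m) this
    simpa using this
  have hγ1 : γ = 1 := by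
    have h1 : ν (Polynomial.C γ) = γ := by simp [hνdef]
    rw [hγ, hνE, hwc] at h1
    exact h1.symm
  have hc1 : c = 1 := by
    apply E.injective
    rw [map_one, ← hγ, hγ1, Polynomial.C_1]
  rw [hc1, mul_one] at hc
  refine ⟨hc, ?_⟩
  have h2 : Polynomial.aeval (X 0 : MvPolynomial (Fin 2) (ZMod p)) Q *
      Polynomial.aeval (X 1 : MvPolynomial (Fin 2) (ZMod p)) Q * Polynomial.aeval s P =
      Polynomial.aeval s Q * Polynomial.aeval s P := by
    rw [← h, hc]; ring
  exact mul_right_cancel₀ hPs_ne h2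
end

section
/- If a polynomial P ∈ F_p[x] with P(0) = 1 satisfies P(x)P(y) = P(xy+x+y) in F_p[x,y], then P(x) = (1+x)^N for some nonnegative integer N. -/
section Aux

variable {R : Type*} [CommRing R]

open Polynomial in
 lemma aux1 (Q : R[X]) : Polynomial.aeval (C X : R[X][X]) Q = C Q := by
  induction Q using Polynomial.induction_on' with
  | add p q hp hq => simp [hp, hq]
  | monomial n a =>
      rw [aeval_monomial, ← C_pow, show algebraMap R R[X][X] a = C (C a) from rfl,
        ← C_mul, Polynomial.C_mul_X_pow_eq_monomial]

open Polynomial in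
lemma aux2 (Q : R[X]) (j : ℕ) : (Polynomial.aeval (X : R[X][X]) Q).coeff j = C (Q.coeff j) := by
  induction Q using Polynomial.induction_on' with
  | add p q hp hq => simp [hp, hq]
  | monomial n a =>
      simp only [aeval_monomial, Polynomial.algebraMap_apply, coeff_C_mul, coeff_X_pow,
        coeff_monomial, apply_ite C, mul_ite, mul_one, mul_zero, map_zero, eq_comm,
        Algebra.algebraMap_self_apply]

open Polynomial in
lemma aux3 (Q : R[X]) (j : ℕ) :
    (Polynomial.aeval (C X * X : R[X][X]) Q).coeff j = C (Q.coeff j) * X ^ j := by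
  induction Q using Polynomial.induction_on' with
  | add p q hp hq => simp [hp, hq, add_mul]
  | monomial n a =>
      rw [aeval_monomial, mul_pow, ← C_pow]
      rw [show algebraMap R R[X][X] a = C (C a) from rfl]
      rw [← mul_assoc, ← C_mul, coeff_C_mul, coeff_X_pow, coeff_monomial]
      rcases eq_or_ne j n with rfl | hne
      · simp
      · simp [hne, Ne.symm hne]

end Aux

open MvPolynomial

/-- If `P ∈ F_p[x]` has `P(0) = 1` and satisfies `P(x)P(y) = P(xy+x+y)` in `F_p[x,y]`,
then `P(x) = (1+x)^N` for some nonnegative integer `N`. -/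
theorem polynomial_multiplicative_is_power {p : ℕ} [Fact p.Prime]
    (P : Polynomial (ZMod p)) (hP0 : P.eval 0 = 1)
    (h : Polynomial.aeval (X 0 : MvPolynomial (Fin 2) (ZMod p)) P *
          Polynomial.aeval (X 1 : MvPolynomial (Fin 2) (ZMod p)) P =
        Polynomial.aeval (X 0 * X 1 + X 0 + X 1 : MvPolynomial (Fin 2) (ZMod p)) P) :
    ∃ N : ℕ, P = (1 + Polynomial.X) ^ N := by
  set R := ZMod p
  set Q : Polynomial R := P.comp (Polynomial.X - 1) with hQdef
  -- substitution relation
  have hQ : ∀ t : Polynomial (Polynomial R), Polynomial.aeval t Q = Polynomial.aeval (t - 1) P := by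
    intro t
    rw [hQdef, Polynomial.aeval_comp]
    simp
  have hPQ : P = Q.comp (Polynomial.X + 1) := by
    rw [hQdef, Polynomial.comp_assoc]
    simp
  -- apply the substitution X i ↦ (corresponding var) - 1
  have h2 := congrArg (MvPolynomial.aeval
      ![(Polynomial.C Polynomial.X - 1 : Polynomial (Polynomial R)), Polynomial.X - 1]) h
  simp only [map_mul, ← Polynomial.aeval_algHom_apply, map_add, MvPolynomial.aeval_X,
    Matrix.cons_val_zero, Matrix.cons_val_one, Matrix.head_cons] at h2
  rw [← hQ (Polynomial.C Polynomial.X), ← hQ Polynomial.X,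
    show (Polynomial.C Polynomial.X - 1) * (Polynomial.X - 1) + (Polynomial.C Polynomial.X - 1)
        + (Polynomial.X - 1) = (Polynomial.C Polynomial.X * Polynomial.X - 1 :
          Polynomial (Polynomial R)) by ring,
    ← hQ (Polynomial.C Polynomial.X * Polynomial.X)] at h2
  -- coefficient extraction
  have key : ∀ j, Polynomial.C (Q.coeff j) * Q = Polynomial.C (Q.coeff j) * Polynomial.X ^ j := by
    intro j
    have h3 := congrArg (fun f => Polynomial.coeff f j) h2
    simp only [aux1, aux3] at h3
    rwa [Polynomial.coeff_C_mul, aux2, mul_comm] at h3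
  have hQne : Q ≠ 0 := by
    intro hz
    have : Q.eval 1 = 1 := by
      rw [hQdef, Polynomial.eval_comp]; simpa using hP0
    rw [hz, Polynomial.eval_zero] at this
    exact one_ne_zero this.symm
  have hlc : Q.coeff Q.natDegree ≠ 0 := by
    exact Polynomial.leadingCoeff_ne_zero.mpr hQne
  obtain ⟨N, hN⟩ : ∃ N, Q = Polynomial.X ^ N :=
    ⟨Q.natDegree, mul_left_cancel₀ (Polynomial.C_ne_zero.mpr hlc) (key Q.natDegree)⟩
  refine ⟨N, ?_⟩
  rw [hPQ, hN, Polynomial.pow_comp, Polynomial.X_comp, add_comm]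
end

section
/- For y ∈ Z_p, the formal power series (1+x)^y = Σ_{n≥0} C(y,n) x^n ∈ F_p[[x]] (binomial coefficients taken mod p) is a rational function of x if and only if y ∈ Z. -/
open PowerSeries

/-- The `p`-adic binomial coefficient `C(y, n)` reduced mod `p`. -/
noncomputable def padicChoose {p : ℕ} [Fact p.Prime] (y : ℤ_[p]) (n : ℕ) : ZMod p :=
  ((y.appr (n + 1)).choose n : ZMod p)

/-- The formal power series `(1+x)^y = Σ C(y,n) xⁿ ∈ F_p[[x]]` for `y ∈ ℤ_p`. -/
noncomputable def padicBinomialSeries {p : ℕ} [Fact p.Prime] (y : ℤ_[p]) : PowerSeries (ZMod p) :=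
  PowerSeries.mk fun n => padicChoose y n

/-- A power series is rational if it equals `P/Q` for polynomials `P, Q`. -/
def IsRationalPS {R : Type*} [CommRing R] (f : PowerSeries R) : Prop :=
  ∃ P Q : Polynomial R, Q ≠ 0 ∧ (Q : PowerSeries R) * f = (P : PowerSeries R)

/-!
Lucas' theorem gives `C(y, p ^ k * n) ≡ C(y', n)`, where `y'` is `y` with its first `k` base-`p`
digits dropped, and the series `(1 + x) ^ y` determines `y`. Over a finite field the coefficients
of a rational series are eventually periodic, say modulo `T` (the denominator divides some
`X ^ k * (X ^ t - 1)`). Since `p ^ (i + t) ≡ p ^ i [MOD T]` for suitable `i` and `t > 0`, the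
series of `y` with its first `i` and with its first `i + t` digits dropped agree, so the digits of
`y` are eventually periodic and `(p ^ t - 1) * y = a` is an integer. Then
`Q ^ b * (1 + x) ^ a = P ^ b` with `b = p ^ t - 1`, and comparing the multiplicities of the root
`-1` gives `b ∣ a`.
-/

theorem exists_pow_add_eq_pow {M : Type*} [Monoid M] [Finite M] (x : M) :
    ∃ k t, 0 < t ∧ x ^ (k + t) = x ^ k := by
  obtain ⟨a, b, hab, h⟩ := Finite.exists_ne_map_eq_of_infinite (x ^ · : ℕ → M)
  rcases Nat.lt_or_gt_of_ne hab with hlt | hlt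
  · exact ⟨a, b - a, by omega, by rw [Nat.add_sub_cancel' hlt.le]; exact h.symm⟩
  · exact ⟨b, a - b, by omega, by rw [Nat.add_sub_cancel' hlt.le]; exact h⟩

theorem Nat.lt_pow_succ_of_one_lt {b : ℕ} (hb : 1 < b) (n : ℕ) : n < b ^ (n + 1) :=
  n.lt_succ_self.trans (Nat.lt_pow_self hb)

theorem Nat.ModEq.apply_eq_of_eventually_periodic {α : Type*} {u : ℕ → α} {N T m n : ℕ}
    (h : m ≡ n [MOD T]) (hu : ∀ n, N ≤ n → u (n + T) = u n) (hm : N ≤ m) (hn : N ≤ n) :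
    u m = u n := by
  wlog hle : m ≤ n generalizing m n
  · exact (this h.symm hn hm (by omega)).symm
  obtain ⟨j, hj⟩ := (Nat.modEq_iff_dvd' hle).mp h
  obtain rfl : n = m + T * j := by omega
  clear hj h hle hn
  induction j with
  | zero => rfl
  | succ j ih => rw [mul_add_one, ← add_assoc, hu _ (by omega), ih]

theorem Nat.eq_of_natCast_choose_eq {R : Type*} [AddMonoidWithOne R] [NeZero (1 : R)]
    {A B N : ℕ} (hA : A < N) (hB : B < N) (h : ∀ n < N, (A.choose n : R) = B.choose n) :
    A = B := by
  by_contra hne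
  wlog hlt : A < B generalizing A B
  · exact this hB hA (fun n hn => (h n hn).symm) (Ne.symm hne) (by omega)
  have hAB := h B hB
  rw [Nat.choose_eq_zero_of_lt hlt, Nat.choose_self, Nat.cast_zero, Nat.cast_one] at hAB
  exact zero_ne_one hAB

namespace Polynomial

theorem exists_dvd_X_pow_add_sub_X_pow {K : Type*} [Field K] [Finite K] {Q : K[X]} (hQ : Q ≠ 0) :
    ∃ k t, 0 < t ∧ Q ∣ X ^ (k + t) - X ^ k := by
  have := (AdjoinRoot.powerBasis hQ).finite
  have := Module.finite_of_finite K (M := AdjoinRoot Q)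
  obtain ⟨k, t, ht, h⟩ := exists_pow_add_eq_pow (AdjoinRoot.root Q)
  refine ⟨k, t, ht, AdjoinRoot.mk_eq_zero.mp ?_⟩
  rw [map_sub, map_pow, map_pow, AdjoinRoot.mk_X, h, sub_self]

theorem intCast_dvd_sub_of_pow_mul_eq {R : Type*} [CommRing R] [IsDomain R]
    {P Q : R[X]} (hQ : Q ≠ 0) (c : R) {b M M' : ℕ}
    (h : Q ^ b * (X - C c) ^ M = P ^ b * (X - C c) ^ M') : (b : ℤ) ∣ M - M' := by
  classical
  have hL : Q ^ b * (X - C c) ^ M ≠ 0 :=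
    mul_ne_zero (pow_ne_zero _ hQ) (pow_ne_zero _ (X_sub_C_ne_zero c))
  have hcount := congrArg (fun f => f.roots.count c) h
  simp only [roots_mul hL, roots_mul (h ▸ hL), roots_pow, roots_X_sub_C, Multiset.count_add,
    Multiset.count_nsmul, count_roots, Multiset.count_singleton_self, mul_one] at hcount
  refine ⟨P.rootMultiplicity c - Q.rootMultiplicity c, ?_⟩
  zify at hcount
  linarith

end Polynomial

theorem IsRationalPS.exists_coeff_eq_of_modEq {K : Type*} [Field K] [Finite K] {f : K⟦X⟧}
    (hf : IsRationalPS f) : ∃ N T, 0 < T ∧ ∀ m n, N ≤ m → N ≤ n → m ≡ n [MOD T] →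
      coeff m f = coeff n f := by
  obtain ⟨P, Q, hQ, hQf⟩ := hf
  obtain ⟨k, t, ht, S, hS⟩ := Polynomial.exists_dvd_X_pow_add_sub_X_pow hQ
  have hR : ((X ^ (k + t) - X ^ k : K⟦X⟧)) * f = ((S * P : Polynomial K) : K⟦X⟧) := by
    have := congrArg (fun g : Polynomial K => (g : K⟦X⟧)) hS
    simp only [Polynomial.coe_sub, Polynomial.coe_pow, Polynomial.coe_X, Polynomial.coe_mul] at this
    rw [this, Polynomial.coe_mul, mul_comm (Q : K⟦X⟧), mul_assoc, hQf]
  refine ⟨(S * P).natDegree + 1, t, ht, fun m n hm hn h => ?_⟩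
  refine h.apply_eq_of_eventually_periodic (u := fun n => coeff n f) (fun i hi => ?_) hm hn
  have := congrArg (coeff (i + k + t)) hR
  rw [Polynomial.coeff_coe, Polynomial.coeff_eq_zero_of_natDegree_lt (by omega), sub_mul,
    map_sub, coeff_X_pow_mul', coeff_X_pow_mul', if_pos (by omega), if_pos (by omega),
    sub_eq_zero] at this
  rwa [show i + k + t - (k + t) = i by omega, show i + k + t - k = i + t by omega, eq_comm] at this

section

variable {p : ℕ} [hp : Fact p.Prime]

namespace Choose

theorem natCast_choose_pow_mul (A k m : ℕ) :
    (A.choose (p ^ k * m) : ZMod p) = ((A / p ^ k).choose m : ZMod p) := by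
  induction k generalizing A with
  | zero => simp
  | succ k ih =>
    rw [(ZMod.natCast_eq_natCast_iff _ _ _).mpr choose_modEq_choose_mod_mul_choose_div_nat,
      pow_succ', mul_assoc, Nat.mul_mod_right, Nat.mul_div_cancel_left _ hp.out.pos,
      Nat.choose_zero_right, one_mul, ih, Nat.div_div_eq_div_mul]

theorem natCast_choose_mod_pow {A k n : ℕ} (hn : n < p ^ k) :
    (A.choose n : ZMod p) = ((A % p ^ k).choose n : ZMod p) := by
  have hdigit : ∀ i ∈ Finset.range k, A % p ^ k / p ^ i % p = A / p ^ i % p := by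
    intro i hi
    have hik : i < k := Finset.mem_range.mp hi
    rw [← Nat.add_sub_cancel' hik.le, pow_add, Nat.mod_mul_right_div_self,
      Nat.mod_mod_of_dvd _ (dvd_pow_self p (by omega))]
  have hA := choose_modEq_choose_mul_prod_range_choose (n := A) (k := n) (p := p) k
  have hB := choose_modEq_choose_mul_prod_range_choose (n := A % p ^ k) (k := n) (p := p) k
  rw [Finset.prod_congr rfl fun i hi => by rw [hdigit i hi]] at hB
  rw [Nat.div_eq_of_lt hn, Nat.choose_zero_right] at hA hB
  exact_mod_cast (ZMod.intCast_eq_intCast_iff _ _ _).mpr (hA.trans hB.symm)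

end Choose

namespace PadicInt

theorem appr_eq_mod_of_sub_mem {y : ℤ_[p]} {k M : ℕ}
    (h : y - M ∈ Ideal.span {(p : ℤ_[p]) ^ k}) : y.appr k = M % p ^ k := by
  have := zmod_congr_of_sub_mem_span k y _ _ (appr_spec k y) h
  rwa [ZMod.natCast_eq_natCast_iff', Nat.mod_eq_of_lt (appr_lt y k)] at this

theorem appr_mod_pow (y : ℤ_[p]) {j k : ℕ} (h : j ≤ k) : y.appr k % p ^ j = y.appr j :=
  (appr_eq_mod_of_sub_mem
    (Ideal.span_singleton_le_span_singleton.mpr (pow_dvd_pow _ h) (appr_spec k y))).symm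

theorem eq_of_forall_appr_eq {x y : ℤ_[p]} (h : ∀ k, x.appr k = y.appr k) : x = y :=
  ext_of_toZModPow.mp fun k => congrArg Nat.cast (h k)

end PadicInt

open PadicInt

/-- `(y - y.appr k) / p ^ k`: the `p`-adic integer `y` with its first `k` digits dropped. -/
noncomputable def dropDigits (k : ℕ) (y : ℤ_[p]) : ℤ_[p] :=
  Classical.choose (Ideal.mem_span_singleton.mp (appr_spec k y))

theorem appr_add_pow_mul_dropDigits (k : ℕ) (y : ℤ_[p]) :
    (y.appr k : ℤ_[p]) + p ^ k * dropDigits k y = y := by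
  rw [dropDigits, ← Classical.choose_spec (Ideal.mem_span_singleton.mp (appr_spec k y))]
  ring

theorem padicChoose_eq_choose_appr (y : ℤ_[p]) {n k : ℕ} (hn : n < p ^ k) :
    padicChoose y n = (y.appr k).choose n := by
  have hn' : n < p ^ min (n + 1) k := by
    rcases min_cases (n + 1) k with ⟨h, -⟩ | ⟨h, -⟩ <;> rw [h]
    exacts [Nat.lt_pow_succ_of_one_lt hp.out.one_lt n, hn]
  rw [padicChoose, Choose.natCast_choose_mod_pow hn', appr_mod_pow y (min_le_left _ _), eq_comm,
    Choose.natCast_choose_mod_pow hn', appr_mod_pow y (min_le_right _ _)]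

theorem padicChoose_natCast (M n : ℕ) : padicChoose (M : ℤ_[p]) n = M.choose n := by
  rw [padicChoose, appr_eq_mod_of_sub_mem (by rw [sub_self]; exact zero_mem _),
    ← Choose.natCast_choose_mod_pow (Nat.lt_pow_succ_of_one_lt hp.out.one_lt n)]

theorem padicChoose_pow_mul (y : ℤ_[p]) (k n : ℕ) :
    padicChoose y (p ^ k * n) = padicChoose (dropDigits k y) n := by
  set B := (dropDigits k y).appr (n + 1)
  have hsub : y - ((y.appr k + p ^ k * B : ℕ) : ℤ_[p]) ∈
      Ideal.span {(p : ℤ_[p]) ^ (k + (n + 1))} := by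
    obtain ⟨c, hc⟩ := Ideal.mem_span_singleton.mp (appr_spec (n + 1) (dropDigits k y))
    refine Ideal.mem_span_singleton.mpr ⟨c, ?_⟩
    nth_rewrite 1 [← appr_add_pow_mul_dropDigits k y]
    push_cast
    linear_combination (p : ℤ_[p]) ^ k * hc
  have hlt : y.appr k + p ^ k * B < p ^ (k + (n + 1)) := by
    have := appr_lt y k
    have := appr_lt (dropDigits k y) (n + 1)
    rw [pow_add]
    nlinarith
  have hn : p ^ k * n < p ^ (k + (n + 1)) := by
    rw [pow_add]
    exact Nat.mul_lt_mul_of_pos_left (Nat.lt_pow_succ_of_one_lt hp.out.one_lt n)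
      (pow_pos hp.out.pos k)
  rw [padicChoose_eq_choose_appr y hn, appr_eq_mod_of_sub_mem hsub, Nat.mod_eq_of_lt hlt,
    Choose.natCast_choose_pow_mul, Nat.add_mul_div_left _ _ (pow_pos hp.out.pos k),
    Nat.div_eq_of_lt (appr_lt y k), zero_add]
  rfl

theorem padicBinomialSeries_add (a b : ℤ_[p]) :
    padicBinomialSeries (a + b) = padicBinomialSeries a * padicBinomialSeries b := by
  ext n
  have hsub : a + b - ((a.appr (n + 1) + b.appr (n + 1) : ℕ) : ℤ_[p]) ∈
      Ideal.span {(p : ℤ_[p]) ^ (n + 1)} := by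
    convert add_mem (appr_spec (n + 1) a) (appr_spec (n + 1) b) using 1
    push_cast
    ring
  have hn := Nat.lt_pow_succ_of_one_lt hp.out.one_lt n
  rw [coeff_mul]
  simp only [padicBinomialSeries, coeff_mk]
  rw [padicChoose, appr_eq_mod_of_sub_mem hsub, ← Choose.natCast_choose_mod_pow hn,
    Nat.add_choose_eq, Nat.cast_sum]
  refine Finset.sum_congr rfl fun ij hij => ?_
  rw [Nat.cast_mul,
    padicChoose_eq_choose_appr a ((Finset.HasAntidiagonal.antidiagonal.fst_le hij).trans_lt hn),
    padicChoose_eq_choose_appr b ((Finset.HasAntidiagonal.antidiagonal.snd_le hij).trans_lt hn)]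

theorem padicBinomialSeries_natCast (M : ℕ) :
    padicBinomialSeries (M : ℤ_[p]) = ((Polynomial.X + 1) ^ M : Polynomial (ZMod p)) := by
  ext n
  rw [Polynomial.coeff_coe, Polynomial.coeff_X_add_one_pow, padicBinomialSeries, coeff_mk,
    padicChoose_natCast]

theorem padicBinomialSeries_nsmul (n : ℕ) (y : ℤ_[p]) :
    padicBinomialSeries (n • y) = padicBinomialSeries y ^ n := by
  induction n with
  | zero => simpa using padicBinomialSeries_natCast (p := p) 0
  | succ n ih => rw [succ_nsmul, padicBinomialSeries_add, ih, pow_succ]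

theorem padicBinomialSeries_intCast_mul (a : ℤ) :
    padicBinomialSeries (a : ℤ_[p]) * ((Polynomial.X + 1) ^ (-a).toNat : Polynomial (ZMod p)) =
      ((Polynomial.X + 1) ^ a.toNat : Polynomial (ZMod p)) := by
  rw [← padicBinomialSeries_natCast, ← padicBinomialSeries_natCast, ← padicBinomialSeries_add]
  congr 1
  exact_mod_cast (by omega : a + (-a).toNat = a.toNat)

theorem padicBinomialSeries_injective :
    Function.Injective (padicBinomialSeries : ℤ_[p] → (ZMod p)⟦X⟧) := by
  intro x y h
  refine eq_of_forall_appr_eq fun k =>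
    Nat.eq_of_natCast_choose_eq (R := ZMod p) (appr_lt x k) (appr_lt y k) fun n hn => ?_
  have := congrArg (coeff n) h
  simp only [padicBinomialSeries, coeff_mk] at this
  rwa [padicChoose_eq_choose_appr x hn, padicChoose_eq_choose_appr y hn] at this

theorem isRationalPS_padicBinomialSeries_intCast (a : ℤ) :
    IsRationalPS (padicBinomialSeries (a : ℤ_[p])) := by
  refine ⟨(Polynomial.X + 1) ^ a.toNat, (Polynomial.X + 1) ^ (-a).toNat,
    pow_ne_zero _ (Polynomial.X_add_C_ne_zero 1), ?_⟩
  rw [mul_comm, padicBinomialSeries_intCast_mul]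

theorem IsRationalPS.exists_dropDigits_add_eq {y : ℤ_[p]}
    (h : IsRationalPS (padicBinomialSeries y)) :
    ∃ i t, 0 < t ∧ dropDigits (i + t) y = dropDigits i y := by
  obtain ⟨N, T, hT, hper⟩ := h.exists_coeff_eq_of_modEq
  have : NeZero T := ⟨hT.ne'⟩
  obtain ⟨k, t, ht, hkt⟩ := exists_pow_add_eq_pow (p : ZMod T)
  refine ⟨k + N, t, ht, padicBinomialSeries_injective (PowerSeries.ext fun n => ?_)⟩
  simp only [padicBinomialSeries, coeff_mk, ← padicChoose_pow_mul]
  rcases n.eq_zero_or_pos with rfl | hn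
  · simp
  have hN : N ≤ p ^ (k + N) * n :=
    calc N ≤ k + N := by omega
      _ ≤ p ^ (k + N) := (Nat.lt_pow_self hp.out.one_lt).le
      _ ≤ p ^ (k + N) * n := Nat.le_mul_of_pos_right _ hn
  have hNt : N ≤ p ^ (k + N + t) * n :=
    hN.trans (Nat.mul_le_mul_right n (Nat.pow_le_pow_right hp.out.pos (by omega)))
  have hmod : p ^ (k + N + t) * n ≡ p ^ (k + N) * n [MOD T] := by
    rw [← ZMod.natCast_eq_natCast_iff]
    push_cast
    rw [add_right_comm, pow_add, hkt, ← pow_add]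
  simpa only [padicBinomialSeries, coeff_mk] using hper _ _ hNt hN hmod

theorem exists_pos_mul_eq_intCast_of_dropDigits_add_eq {y : ℤ_[p]} {i t : ℕ} (ht : 0 < t)
    (h : dropDigits (i + t) y = dropDigits i y) :
    ∃ b : ℕ, 0 < b ∧ ∃ a : ℤ, (b : ℤ_[p]) * y = a := by
  refine ⟨p ^ t - 1, Nat.sub_pos_of_lt (Nat.one_lt_pow ht.ne' hp.out.one_lt),
    p ^ t * y.appr i - y.appr (i + t), ?_⟩
  have h1 := appr_add_pow_mul_dropDigits i y
  have h2 := appr_add_pow_mul_dropDigits (i + t) y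
  rw [h] at h2
  push_cast [Nat.one_le_pow _ _ hp.out.pos]
  linear_combination h2 - (p : ℤ_[p]) ^ t * h1

theorem eq_intCast_of_isRationalPS_of_mul_eq {y : ℤ_[p]}
    (h : IsRationalPS (padicBinomialSeries y)) {b : ℕ} (hb : 0 < b) {a : ℤ}
    (hba : (b : ℤ_[p]) * y = a) : ∃ m : ℤ, y = m := by
  obtain ⟨P, Q, hQ, hQf⟩ := h
  have hX : (Polynomial.X + 1 : Polynomial (ZMod p)) = Polynomial.X - Polynomial.C (-1) := by
    simp
  have key : Q ^ b * (Polynomial.X - Polynomial.C (-1)) ^ a.toNat =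
      P ^ b * (Polynomial.X - Polynomial.C (-1)) ^ (-a).toNat := by
    rw [← hX]
    apply Polynomial.coe_injective
    rw [Polynomial.coe_mul, Polynomial.coe_mul, Polynomial.coe_pow (φ := Q),
      Polynomial.coe_pow (φ := P), ← padicBinomialSeries_intCast_mul, ← hba, ← nsmul_eq_mul,
      padicBinomialSeries_nsmul, ← hQf]
    ring
  obtain ⟨m, hm⟩ := Polynomial.intCast_dvd_sub_of_pow_mul_eq hQ (-1) key
  rw [Int.toNat_sub_toNat_neg] at hm
  refine ⟨m, mul_left_cancel₀ (Nat.cast_ne_zero.mpr hb.ne') ?_⟩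
  rw [hba, hm]
  push_cast
  ring

end

/-- For `y ∈ ℤ_p`, the series `(1+x)^y = Σ C(y,n) xⁿ ∈ F_p[[x]]` is a rational function of `x`
iff `y` is a rational integer. -/
theorem binomialSeries_rational_iff {p : ℕ} [Fact p.Prime] (y : ℤ_[p]) :
    IsRationalPS (padicBinomialSeries y) ↔ ∃ m : ℤ, y = (m : ℤ_[p]) := by
  refine ⟨fun h => ?_, fun ⟨m, hm⟩ => hm ▸ isRationalPS_padicBinomialSeries_intCast m⟩
  obtain ⟨i, t, ht, hdrop⟩ := h.exists_dropDigits_add_eq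
  obtain ⟨b, hb, a, hba⟩ := exists_pos_mul_eq_intCast_of_dropDigits_add_eq ht hdrop
  exact eq_intCast_of_isRationalPS_of_mul_eq h hb hba
end
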